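/- arXiv:2009.13949 — 5 statements merged into one kernel-verified Lean document; each statement's English description precedes it below -/
import Mathlib

section
/- Let T be an ℓ-forest on n vertices with non-negative vertex weights ω, and let β > 0. Then there exists a set S of at most β + ℓ vertices such that every connected component of T - S has total weight at most ω(V(T))/β. -/
/-- A graph is an `ℓ`-forest if it can be made acyclic by deleting at most `ℓ` edges. -/
def IsLForest {V : Type*} (G : SimpleGraph V) (ℓ : ℕ) : Prop :=
  ∃ s : Finset (Sym2 V), ↑s ⊆ G.edgeSet ∧ s.card ≤ ℓ ∧ (G.deleteEdges ↑s).IsAcyclic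

/-!
Let `t = ω(V)/β`. In a forest with a component of weight `> t`, choose an inclusion-minimal set
`A` of weight `> t` that is joined to the rest of the graph only through one vertex `v ∈ A`.
Every component of `A - v` has weight `≤ t`: such a component meets `v` in at most one edge, since
the graph is acyclic, so a heavy one would be a smaller set of the same kind. Delete `v`, keep the
components of `A - v`, and recurse on the rest. The deleted vertices own disjoint sets of weight
`> t` each, so there are fewer than `β` of them. In an `ℓ`-forest, deleting one endpoint of each
of the at most `ℓ` extra edges reduces to the forest case.
-/

lemma finsum_mem_le_finsum_mem_of_subset {α M : Type*} [AddCommMonoid M] [PartialOrder M]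
    [IsOrderedAddMonoid M] {f : α → M} (hf : ∀ i, 0 ≤ f i) {s t : Set α} (hst : s ⊆ t)
    (ht : t.Finite) : ∑ᶠ i ∈ s, f i ≤ ∑ᶠ i ∈ t, f i := by
  rw [← finsum_mem_add_sdiff hst ht]
  exact le_add_of_nonneg_right (finsum_nonneg fun i => finsum_nonneg fun _ => hf i)

namespace SimpleGraph

variable {V : Type*} {G : SimpleGraph V} {U X Y A : Set V} {u v : V}

lemma Reachable.mem_of_forall_adj_mem {W : Type*} {H : SimpleGraph W} {P : Set W}
    (hP : ∀ a b, H.Adj a b → a ∈ P → b ∈ P) {a b : W} (h : H.Reachable a b) (ha : a ∈ P) :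
    b ∈ P := by
  obtain ⟨p⟩ := h
  induction p with
  | nil => exact ha
  | cons hab _ ih => exact ih (hP _ _ hab ha)

lemma induce_deleteEdges_of_forall_exists_notMem {s : Set (Sym2 V)}
    (h : ∀ e ∈ s, ∃ v ∈ e, v ∉ X) : (G.deleteEdges s).induce X = G.induce X := by
  ext a b
  simp only [comap_adj, Function.Embedding.coe_subtype, deleteEdges_adj, and_iff_left_iff_imp]
  intro _ hab
  obtain ⟨w, hw, hwX⟩ := h _ hab
  rcases Sym2.mem_iff.mp hw with rfl | rfl
  exacts [hwX a.2, hwX b.2]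

namespace ConnectedComponent

lemma mem_image_supp_of_adj (c : (G.induce X).ConnectedComponent) {a b : V}
    (ha : a ∈ Subtype.val '' c.supp) (hb : b ∈ X) (hab : G.Adj a b) :
    b ∈ Subtype.val '' c.supp := by
  obtain ⟨a, ha, rfl⟩ := ha
  exact ⟨⟨b, hb⟩, c.mem_supp_of_adj_mem_supp ha (induce_adj.mpr hab), rfl⟩

lemma image_supp_subset_or_subset_compl (c : (G.induce X).ConnectedComponent) {P : Set V}
    (hP : ∀ a ∈ X, ∀ b ∈ X, G.Adj a b → a ∈ P → b ∈ P) :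
    Subtype.val '' c.supp ⊆ P ∨ Subtype.val '' c.supp ⊆ Pᶜ := by
  have hclosed : ∀ a b : X, (G.induce X).Adj a b → a ∈ Subtype.val ⁻¹' P →
      b ∈ Subtype.val ⁻¹' P :=
    fun a b hab => hP a a.2 b b.2 (induce_adj.mp hab)
  obtain ⟨u, hu⟩ := c.nonempty_supp
  by_cases huP : (u : V) ∈ P
  · left
    rintro _ ⟨w, hw, rfl⟩
    exact (c.reachable_of_mem_supp hu hw).mem_of_forall_adj_mem hclosed huP
  · right
    rintro _ ⟨w, hw, rfl⟩ hwP
    exact huP ((c.reachable_of_mem_supp hw hu).mem_of_forall_adj_mem hclosed hwP)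

lemma exists_image_supp_subset (c : (G.induce X).ConnectedComponent)
    (h : Subtype.val '' c.supp ⊆ Y) :
    ∃ c' : (G.induce Y).ConnectedComponent, Subtype.val '' c.supp ⊆ Subtype.val '' c'.supp := by
  classical
  obtain ⟨u, hu⟩ := c.nonempty_supp
  refine ⟨(G.induce Y).connectedComponentMk ⟨u, h ⟨u, hu, rfl⟩⟩, ?_⟩
  rintro _ ⟨w, hw, rfl⟩
  obtain ⟨p⟩ := c.reachable_of_mem_supp hw hu
  let q : G.Walk w u := p.map (Embedding.induce X).toHom
  have hq : ∀ z ∈ q.support, z ∈ Y := by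
    intro z hz
    rw [show q.support = p.support.map Subtype.val from Walk.support_map _ _, List.mem_map] at hz
    obtain ⟨z, hz, rfl⟩ := hz
    exact h ⟨z, (ConnectedComponent.sound ⟨(p.takeUntil z hz).reverse⟩).trans hw, rfl⟩
  exact ⟨⟨w, hq w q.start_mem_support⟩, ConnectedComponent.sound ⟨q.induce Y hq⟩, rfl⟩

end ConnectedComponent

lemma IsAcyclic.eq_of_adj_of_mem_image_supp (hG : G.IsAcyclic)
    (c : (G.induce X).ConnectedComponent) (hv : v ∉ X) {x y : V}
    (hx : x ∈ Subtype.val '' c.supp) (hy : y ∈ Subtype.val '' c.supp)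
    (hvx : G.Adj v x) (hvy : G.Adj v y) : x = y := by
  obtain ⟨x, hx, rfl⟩ := hx
  obtain ⟨y, hy, rfl⟩ := hy
  obtain ⟨p⟩ := c.reachable_of_mem_supp hx hy
  let q : G.Walk x y := p.map (Embedding.induce X).toHom
  have hvq : v ∉ q.support := by
    rw [show q.support = p.support.map Subtype.val from Walk.support_map _ _, List.mem_map]
    rintro ⟨z, -, rfl⟩
    exact hv z.2
  by_contra hxy
  -- `v, x, …, y` avoids the edge `vy`, which is a bridge of the forest
  refine isBridge_iff.mp (isAcyclic_iff_forall_isBridge.mp hG hvy)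
    (reachable_deleteEdges_iff_exists_walk.mpr ⟨q.cons hvx, ?_⟩)
  rw [Walk.edges_cons, List.mem_cons, not_or]
  refine ⟨fun he => hxy ?_, fun he => hvq (q.fst_mem_support_of_mem_edges he)⟩
  rcases Sym2.eq_iff.mp he with ⟨-, h⟩ | ⟨h, -⟩
  · exact h.symm
  · exact (hv (h ▸ x.2)).elim

/-- In a rooted forest on `U`, the subtree below `v` is a branch at `v`. -/
structure IsBranch (G : SimpleGraph V) (U A : Set V) (v : V) : Prop where
  mem : v ∈ A
  subset : A ⊆ U
  eq_of_adj : ∀ a ∈ A, ∀ b ∈ U \ A, G.Adj a b → a = v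

lemma isBranch_image_supp (c : (G.induce U).ConnectedComponent)
    (hu : u ∈ Subtype.val '' c.supp) : IsBranch G U (Subtype.val '' c.supp) u :=
  ⟨hu, Subtype.coe_image_subset _ _,
    fun _ ha _ hb hab => (hb.2 (c.mem_image_supp_of_adj ha hb.1 hab)).elim⟩

lemma IsBranch.exists_isBranch_image_supp (hG : G.IsAcyclic) (hA : IsBranch G U A v)
    (d : (G.induce (A \ {v})).ConnectedComponent) :
    ∃ x, IsBranch G U (Subtype.val '' d.supp) x := by
  set D := Subtype.val '' d.supp
  have hDA : D ⊆ A \ {v} := Subtype.coe_image_subset _ _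
  have hexit : ∀ a ∈ D, ∀ b ∈ U \ D, G.Adj a b → b = v := by
    intro a ha b hb hab
    by_contra hbv
    by_cases hbA : b ∈ A
    · exact hb.2 (d.mem_image_supp_of_adj ha ⟨hbA, hbv⟩ hab)
    · exact (hDA ha).2 (hA.eq_of_adj a (hDA ha).1 b ⟨hb.1, hbA⟩ hab)
  have hDU : D ⊆ U := fun a ha => hA.subset (hDA ha).1
  by_cases hnbr : ∃ x ∈ D, G.Adj v x
  · obtain ⟨x, hxD, hvx⟩ := hnbr
    refine ⟨x, hxD, hDU, fun a ha b hb hab => ?_⟩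
    have hbv := hexit a ha b hb hab
    subst hbv
    exact hG.eq_of_adj_of_mem_image_supp d (fun h => h.2 rfl) ha hxD hab.symm hvx
  · obtain ⟨x, hx⟩ := d.nonempty_supp
    refine ⟨x, ⟨x, hx, rfl⟩, hDU, fun a ha b hb hab => ?_⟩
    have hbv := hexit a ha b hb hab
    subst hbv
    exact (hnbr ⟨a, ha, hab.symm⟩).elim

variable {ω : V → ℝ} {t : ℝ}

def ComponentWeightsLE (G : SimpleGraph V) (ω : V → ℝ) (X : Set V) (t : ℝ) : Prop :=
  ∀ c : (G.induce X).ConnectedComponent, ∑ᶠ v ∈ c.supp, ω v ≤ t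

lemma finsum_supp_eq_finsum_image (c : (G.induce X).ConnectedComponent) :
    ∑ᶠ v ∈ c.supp, ω v = ∑ᶠ v ∈ Subtype.val '' c.supp, ω v :=
  (finsum_mem_image Subtype.val_injective.injOn).symm

lemma ComponentWeightsLE.finsum_supp_le [Finite V] (hω : ∀ v, 0 ≤ ω v)
    (hY : ComponentWeightsLE G ω Y t) (c : (G.induce X).ConnectedComponent)
    (h : Subtype.val '' c.supp ⊆ Y) : ∑ᶠ v ∈ c.supp, ω v ≤ t := by
  obtain ⟨c', hc'⟩ := c.exists_image_supp_subset h
  calc ∑ᶠ v ∈ c.supp, ω v = ∑ᶠ v ∈ Subtype.val '' c.supp, ω v := finsum_supp_eq_finsum_image c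
    _ ≤ ∑ᶠ v ∈ Subtype.val '' c'.supp, ω v :=
      finsum_mem_le_finsum_mem_of_subset hω hc' (Set.toFinite _)
    _ = ∑ᶠ v ∈ c'.supp, ω v := (finsum_supp_eq_finsum_image c').symm
    _ ≤ t := hY c'

lemma IsAcyclic.exists_heavy_branch_with_light_components [Finite V] (hG : G.IsAcyclic)
    (c : (G.induce U).ConnectedComponent) (hc : t < ∑ᶠ v ∈ c.supp, ω v) :
    ∃ A v, IsBranch G U A v ∧ t < ∑ᶠ a ∈ A, ω a ∧ ComponentWeightsLE G ω (A \ {v}) t := by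
  obtain ⟨A, ⟨v, hA, hAt⟩, hmin⟩ := exists_minimal_of_wellFoundedLT
    (fun A : Set V => ∃ v, IsBranch G U A v ∧ t < ∑ᶠ a ∈ A, ω a) <| by
      obtain ⟨u, hu⟩ := c.nonempty_supp
      exact ⟨_, u, isBranch_image_supp c ⟨u, hu, rfl⟩, (finsum_supp_eq_finsum_image c) ▸ hc⟩
  refine ⟨A, v, hA, hAt, fun d => ?_⟩
  by_contra! hd
  obtain ⟨x, hx⟩ := hA.exists_isBranch_image_supp hG d
  have hDA : Subtype.val '' d.supp ⊆ A \ {v} := Subtype.coe_image_subset _ _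
  have hAD := hmin ⟨x, hx, (finsum_supp_eq_finsum_image d) ▸ hd⟩ fun a ha => (hDA ha).1
  exact (hDA (hAD hA.mem)).2 rfl

lemma IsBranch.componentWeightsLE_sdiff_insert [Finite V] (hω : ∀ v, 0 ≤ ω v)
    (hA : IsBranch G U A v) {S : Set V} (hAv : ComponentWeightsLE G ω (A \ {v}) t)
    (hS : ComponentWeightsLE G ω ((U \ A) \ S) t) :
    ComponentWeightsLE G ω (U \ insert v S) t := by
  intro c
  have hcX := Subtype.coe_image_subset _ c.supp
  have hsplit : ∀ a ∈ U \ insert v S, ∀ b ∈ U \ insert v S, G.Adj a b → a ∈ A → b ∈ A := by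
    intro a ha b hb hab haA
    by_contra hbA
    exact ha.2 (hA.eq_of_adj a haA b ⟨hb.1, hbA⟩ hab ▸ Set.mem_insert a S)
  rcases c.image_supp_subset_or_subset_compl hsplit with hcA | hcA
  · refine hAv.finsum_supp_le hω c fun a ha => ⟨hcA ha, fun hav => (hcX ha).2 ?_⟩
    exact Set.mem_of_eq_of_mem hav (Set.mem_insert v S)
  · exact hS.finsum_supp_le hω c fun a ha =>
      ⟨⟨(hcX ha).1, hcA ha⟩, fun haS => (hcX ha).2 (Set.mem_insert_of_mem v haS)⟩

/-- The bound is strict so that zero total weight forces `S = ∅`. -/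
theorem IsAcyclic.exists_separator [Finite V] (hG : G.IsAcyclic) (hω : ∀ v, 0 ≤ ω v)
    (ht : 0 ≤ t) (U : Set V) :
    ∃ S : Finset V, (S = ∅ ∨ S.card * t < ∑ᶠ v ∈ U, ω v) ∧ ComponentWeightsLE G ω (U \ S) t := by
  classical
  induction U using WellFoundedLT.induction with
  | _ U ih =>
  by_cases hU : ComponentWeightsLE G ω U t
  · exact ⟨∅, Or.inl rfl, by simpa using hU⟩
  obtain ⟨c, hc⟩ : ∃ c : (G.induce U).ConnectedComponent, t < ∑ᶠ v ∈ c.supp, ω v := by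
    simpa [ComponentWeightsLE] using hU
  obtain ⟨A, v, hA, hAt, hAlight⟩ := hG.exists_heavy_branch_with_light_components c hc
  obtain ⟨S, hS, hSlight⟩ :=
    ih (U \ A) (Set.sdiff_ssubset_left_iff.mpr ⟨v, hA.subset hA.mem, hA.mem⟩)
  refine ⟨insert v S, Or.inr ?_, ?_⟩
  · have hSt : S.card * t ≤ ∑ᶠ v ∈ U \ A, ω v := by
      rcases hS with rfl | hS
      · simpa using finsum_nonneg fun i => finsum_nonneg fun _ => hω i
      · exact hS.le
    calc ((insert v S).card : ℝ) * t ≤ (S.card + 1) * t := by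
          gcongr
          exact_mod_cast S.card_insert_le v
      _ = S.card * t + t := by ring
      _ < ∑ᶠ v ∈ U \ A, ω v + ∑ᶠ a ∈ A, ω a := add_lt_add_of_le_of_lt hSt hAt
      _ = ∑ᶠ v ∈ U, ω v := by
          rw [add_comm]
          exact finsum_mem_add_sdiff hA.subset U.toFinite
  · rw [Finset.coe_insert]
    exact hA.componentWeightsLE_sdiff_insert hω hAlight hSlight

end SimpleGraph

theorem stmt_7_general {V : Type*} [Fintype V] (T : SimpleGraph V) (ℓ : ℕ)
    (hT : IsLForest T ℓ) (ω : V → ℝ) (hω : ∀ v, 0 ≤ ω v) (β : ℝ) (hβ : 0 < β) :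
    ∃ S : Finset V, (S.card : ℝ) ≤ β + (ℓ : ℝ) ∧
      ∀ c : (T.induce ((↑S)ᶜ : Set V)).ConnectedComponent,
        (∑ᶠ v ∈ c.supp, ω (v : V)) ≤ (∑ v : V, ω v) / β := by
  classical
  obtain ⟨s, -, hsℓ, hs⟩ := hT
  have hW : 0 ≤ ∑ v : V, ω v := Finset.sum_nonneg fun v _ => hω v
  obtain ⟨S₀, hS₀, hS₀light⟩ := hs.exists_separator hω (div_nonneg hW hβ.le) Set.univ
  rw [finsum_mem_univ, finsum_eq_sum_of_fintype] at hS₀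
  have hS₀β : (S₀.card : ℝ) ≤ β := by
    rcases hS₀ with rfl | hS₀
    · simpa using hβ.le
    · rw [mul_div_assoc', div_lt_iff₀ hβ] at hS₀
      exact (lt_of_mul_lt_mul_right (by linarith) hW).le
  let S := S₀ ∪ s.image fun e => e.out.1
  refine ⟨S, ?_, ?_⟩
  · calc (S.card : ℝ) ≤ S₀.card + (s.image fun e => e.out.1).card := by
          exact_mod_cast S₀.card_union_le _
      _ ≤ β + ℓ := by gcongr; exact_mod_cast Finset.card_image_le.trans hsℓ
  · rw [← SimpleGraph.induce_deleteEdges_of_forall_exists_notMem (s := s) (X := (S : Set V)ᶜ)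
      fun e he => ⟨e.out.1, Sym2.out_fst_mem e, Set.notMem_compl_iff.mpr
        (Finset.mem_union_right _ (Finset.mem_image_of_mem (fun e => e.out.1) he))⟩]
    intro c
    refine hS₀light.finsum_supp_le hω c fun a ha => ⟨trivial, fun haS₀ => ?_⟩
    exact Subtype.coe_image_subset _ c.supp ha (by simp [S, Finset.mem_coe.mp haS₀])

/-- an `ℓ`-forest with nonnegative vertex weights admits, for every `β > 0`,
a set `S` of at most `β + ℓ` vertices such that every connected component of `T - S`
has total weight at most `ω(V)/β`. -/
theorem stmt_7 {V : Type*} [Fintype V] [DecidableEq V] (T : SimpleGraph V) (ℓ : ℕ)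
    (hT : IsLForest T ℓ) (ω : V → ℝ) (hω : ∀ v, 0 ≤ ω v) (β : ℝ) (hβ : 0 < β) :
    ∃ S : Finset V, (S.card : ℝ) ≤ β + (ℓ : ℝ) ∧
      ∀ c : (T.induce ((↑S)ᶜ : Set V)).ConnectedComponent,
        (∑ᶠ v ∈ c.supp, ω (v : V)) ≤ (∑ v : V, ω v) / β :=
  stmt_7_general T ℓ hT ω hω β hβ
end

section
/- Let G be a graph with a tree decomposition of width tw, with non-negative vertex weights ω, and let β > 0. Then there exists a set S of at most β·(tw+1) vertices such that every connected component of G - S has total weight at most ω(V(G))/β. -/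
/-!
Root the tree at `r` and call a node `i` heavy if the vertices whose bag lies below `i` weigh
more than `W₀ = ω(V)/β`. A deepest heavy node `i` exists, and since a walk of `G` avoiding `B i`
cannot leave a branch of the tree at `i`, every connected piece of that subtree minus `B i` lies
below a child of `i` and is light. So delete `B i`, discard the subtree and repeat: each round
deletes at most `tw + 1` vertices and discards weight more than `W₀`, hence there are fewer
than `β` rounds.
-/

/-- `(T, B)` is a tree decomposition of `G`. -/
structure IsTreeDecomp {V ι : Type*} (G : SimpleGraph V) (T : SimpleGraph ι)
    (B : ι → Finset V) : Prop where
  tree : T.IsTree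
  covers_vertices : ∀ v : V, ∃ i, v ∈ B i
  covers_edges : ∀ ⦃u v : V⦄, G.Adj u v → ∃ i, u ∈ B i ∧ v ∈ B i
  coherent : ∀ v : V, (T.induce {i | v ∈ B i}).Connected

open Finset

namespace SimpleGraph

variable {ι : Type*} {T : SimpleGraph ι} {i m r x y z : ι}

/-- In a tree, `T.Separates i x y` says that `i` lies on the path from `x` to `y`; for a root `r`,
`T.Separates i r x` says that `x` lies in the subtree below `i`. -/
def Separates (T : SimpleGraph ι) (i x y : ι) : Prop := ∀ w : T.Walk x y, i ∈ w.support

lemma separates_self_left (T : SimpleGraph ι) (x y : ι) : T.Separates x x y :=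
  fun w => w.start_mem_support

lemma Separates.symm (h : T.Separates i x y) : T.Separates i y x := fun w => by
  simpa using h w.reverse

lemma not_separates_trans (hxy : ¬ T.Separates i x y) (hyz : ¬ T.Separates i y z) :
    ¬ T.Separates i x z := by
  simp only [Separates, not_forall] at hxy hyz ⊢
  obtain ⟨p, hp⟩ := hxy
  obtain ⟨q, hq⟩ := hyz
  exact ⟨p.append q, by simp [Walk.mem_support_append_iff, hp, hq]⟩

lemma Separates.dist_le (hxy : T.Reachable x y) (h : T.Separates i x y) :
    T.dist x i ≤ T.dist x y := by
  classical
  obtain ⟨w, hw⟩ := hxy.exists_walk_length_eq_dist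
  calc T.dist x i ≤ (w.takeUntil i (h w)).length := SimpleGraph.dist_le _
    _ ≤ w.length := w.length_takeUntil_le_length _
    _ = T.dist x y := hw

lemma exists_adj_not_separates (h : T.Reachable i x) (hne : i ≠ x) :
    ∃ m, T.Adj i m ∧ ¬ T.Separates i m x := by
  classical
  obtain ⟨w⟩ := h
  cases hw : w.bypass with
  | nil => exact absurd rfl hne
  | cons hadj p =>
    have hpath := w.bypass_isPath
    rw [hw, Walk.cons_isPath_iff] at hpath
    exact ⟨_, hadj, fun hsep => hpath.2 (hsep p)⟩

lemma IsAcyclic.separates_of_adj (hT : T.IsAcyclic) (hadj : T.Adj i m)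
    (hm : ¬ T.Separates i m y) (hi : T.Separates i r y) : T.Separates m r y := by
  classical
  intro w
  by_contra hmw
  obtain ⟨p, hp⟩ := not_forall.1 hm
  set q := w.dropUntil i (hi w)
  have hq : m ∉ q.reverse.bypass.support := fun h =>
    hmw (w.support_dropUntil_subset_support _
      (by simpa using q.reverse.support_bypass_subset_support h))
  -- otherwise `y ⟶ i` (avoiding `m`), the edge `i m` and `m ⟶ y` (avoiding `i`) close a cycle
  have := hT.mem_support_of_ne_mem_support_of_adj_of_isPath p.reverse.bypass_isPath
    q.reverse.bypass_isPath hadj.symm hq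
  exact hp (by simpa using p.reverse.support_bypass_subset_support this)

lemma Separates.mem_of_reachable_induce {s : Set ι} (h : T.Separates i x y) {hx : x ∈ s}
    {hy : y ∈ s} (hxy : (T.induce s).Reachable ⟨x, hx⟩ ⟨y, hy⟩) : i ∈ s := by
  obtain ⟨w⟩ := hxy
  have := h (w.map (Embedding.induce s).toHom)
  erw [Walk.support_map, List.mem_map] at this
  obtain ⟨l, -, rfl⟩ := this
  exact l.2

lemma IsTree.dist_lt_of_adj_of_separates (hT : T.IsTree) (hadj : T.Adj i m)
    (h : T.Separates i r m) : T.dist r i < T.dist r m :=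
  lt_of_le_of_ne (h.dist_le (hT.connected r m)) (hT.dist_ne_of_adj r hadj)

end SimpleGraph

/-- The bound `k * W₀ < ω(A)` is strict so that it still bounds the number `k` of rounds when
`W₀ = 0`. -/
theorem exists_light_separator {V : Type*} [DecidableEq V] (P : Finset V → Prop) {ω : V → ℝ}
    (hω : ∀ v, 0 ≤ ω v) {W₀ : ℝ} (hW₀ : 0 ≤ W₀) {s : ℕ}
    (split : ∀ A : Finset V, W₀ < ∑ v ∈ A, ω v → ∃ X D : Finset V, #X ≤ s ∧ D ⊆ A ∧
      W₀ < ∑ v ∈ D, ω v ∧ ∀ C, P C → C ⊆ A \ X → ¬ Disjoint C D → ∑ v ∈ C, ω v ≤ W₀)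
    (A : Finset V) :
    ∃ (S : Finset V) (k : ℕ), #S ≤ k * s ∧ (k = 0 ∨ k * W₀ < ∑ v ∈ A, ω v) ∧
      ∀ C, P C → C ⊆ A \ S → ∑ v ∈ C, ω v ≤ W₀ := by
  induction A using Finset.strongInduction with
  | H A ih =>
  by_cases hA : ∑ v ∈ A, ω v ≤ W₀
  · refine ⟨∅, 0, by simp, Or.inl rfl, fun C _ hC => le_trans ?_ hA⟩
    exact sum_le_sum_of_subset_of_nonneg (by simpa using hC) fun v _ _ => hω v
  obtain ⟨X, D, hX, hDA, hD, hlight⟩ := split A (not_le.1 hA)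
  have hDne : D.Nonempty := nonempty_of_sum_ne_zero (f := ω) (by linarith)
  obtain ⟨S, k, hS, hk, hSlight⟩ := ih (A \ D) (sdiff_ssubset hDA hDne)
  have hkA : k * W₀ ≤ ∑ v ∈ A \ D, ω v := by
    rcases hk with rfl | hk
    · simpa using sum_nonneg fun v _ => hω v
    · exact hk.le
  refine ⟨X ∪ S, k + 1, ?_, Or.inr ?_, fun C hC hCA => ?_⟩
  · calc #(X ∪ S) ≤ #X + #S := card_union_le X S
      _ ≤ (k + 1) * s := by rw [add_mul]; omega
  · rw [← sum_sdiff hDA]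
    push_cast
    linarith
  · by_cases hCD : Disjoint C D
    · refine hSlight C hC fun v hv => ?_
      have hvA := hCA hv
      simp only [mem_sdiff, mem_union, not_or] at hvA ⊢
      exact ⟨⟨hvA.1, disjoint_left.1 hCD hv⟩, hvA.2.2⟩
    · exact hlight C hC (hCA.trans (sdiff_subset_sdiff le_rfl subset_union_left)) hCD

namespace SimpleGraph

variable {V : Type*} {G : SimpleGraph V}

def PreconnectedOn (G : SimpleGraph V) (s : Set V) : Prop :=
  ∀ u ∈ s, ∀ v ∈ s, ∃ w : G.Walk u v, ∀ x ∈ w.support, x ∈ s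

lemma ConnectedComponent.preconnectedOn_image_supp {s : Set V}
    (c : (G.induce s).ConnectedComponent) : G.PreconnectedOn (Subtype.val '' c.supp) := by
  classical
  rintro _ ⟨a, ha, rfl⟩ _ ⟨b, hb, rfl⟩
  obtain ⟨p⟩ := ConnectedComponent.exact (ha.trans hb.symm)
  refine ⟨p.map (Embedding.induce s).toHom, fun x hx => ?_⟩
  erw [Walk.support_map, List.mem_map] at hx
  obtain ⟨y, hy, rfl⟩ := hx
  refine ⟨y, ?_, rfl⟩
  rw [ConnectedComponent.mem_supp_iff, ← ha]
  exact ConnectedComponent.sound ⟨(p.takeUntil y hy).reverse⟩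

end SimpleGraph

namespace IsTreeDecomp

open SimpleGraph

variable {V ι : Type*} {G : SimpleGraph V} {T : SimpleGraph ι} {B : ι → Finset V}
  (htd : IsTreeDecomp G T B)

noncomputable def bagOf (v : V) : ι := (htd.covers_vertices v).choose

lemma mem_bagOf (v : V) : v ∈ B (htd.bagOf v) := (htd.covers_vertices v).choose_spec

include htd in
lemma not_separates_of_mem {u : V} {i j j' : ι} (hj : u ∈ B j) (hj' : u ∈ B j')
    (hi : u ∉ B i) : ¬ T.Separates i j j' :=
  fun h => hi (h.mem_of_reachable_induce ((htd.coherent u).preconnected ⟨j, hj⟩ ⟨j', hj'⟩))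

lemma not_separates_of_adj {u v : V} {i : ι} (hadj : G.Adj u v) (hu : u ∉ B i) (hv : v ∉ B i) :
    ¬ T.Separates i (htd.bagOf u) (htd.bagOf v) := by
  obtain ⟨j, hju, hjv⟩ := htd.covers_edges hadj
  exact not_separates_trans (htd.not_separates_of_mem (htd.mem_bagOf u) hju hu)
    (htd.not_separates_of_mem hjv (htd.mem_bagOf v) hv)

lemma not_separates_of_walk {u v : V} {i : ι} (w : G.Walk u v) (hw : ∀ x ∈ w.support, x ∉ B i) :
    ¬ T.Separates i (htd.bagOf u) (htd.bagOf v) := by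
  induction w with
  | @nil x =>
    intro h
    have hi : i = htd.bagOf x := by simpa using h Walk.nil
    exact hw x (by simp) (hi ▸ htd.mem_bagOf x)
  | cons hadj p ih =>
    exact not_separates_trans (htd.not_separates_of_adj hadj (hw _ (by simp)) (hw _ (by simp)))
      (ih fun x hx => hw x (by simp [hx]))

lemma separates_of_walk_of_adj {r i m : ι} {u v : V} (hadj : T.Adj i m)
    (hm : ¬ T.Separates i m (htd.bagOf u)) (hu : T.Separates i r (htd.bagOf u)) (w : G.Walk u v)
    (hw : ∀ x ∈ w.support, x ∉ B i) : T.Separates m r (htd.bagOf v) := by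
  have huv := htd.not_separates_of_walk w hw
  have hv : T.Separates i r (htd.bagOf v) := by
    by_contra h
    exact not_separates_trans h (fun h' => huv h'.symm) hu
  exact htd.tree.isAcyclic.separates_of_adj hadj (not_separates_trans hm huv) hv

include htd in
theorem exists_heavy_bag [DecidableEq V] {ω : V → ℝ} (hω : ∀ v, 0 ≤ ω v) {W₀ : ℝ} (hW₀ : 0 ≤ W₀)
    (A : Finset V) (hA : W₀ < ∑ v ∈ A, ω v) :
    ∃ i, ∃ D ⊆ A, W₀ < ∑ v ∈ D, ω v ∧ ∀ C : Finset V, G.PreconnectedOn C → C ⊆ A \ B i →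
      ¬ Disjoint C D → ∑ v ∈ C, ω v ≤ W₀ := by
  classical
  obtain ⟨r⟩ := htd.tree.connected.nonempty
  let D : ι → Finset V := fun j => A.filter fun v => T.Separates j r (htd.bagOf v)
  let Heavy : ι → Prop := fun j => W₀ < ∑ v ∈ D j, ω v
  have hr : Heavy r := by simpa [Heavy, D, separates_self_left] using hA
  have hbdd : ∀ j, Heavy j → T.dist r j ≤ A.sup fun v => T.dist r (htd.bagOf v) := by
    intro j hj
    obtain ⟨v, hv⟩ := nonempty_of_sum_ne_zero (f := ω) (s := D j) (by linarith [hj])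
    obtain ⟨hvA, hvj⟩ := mem_filter.1 hv
    exact (hvj.dist_le (htd.tree.connected _ _)).trans
      (le_sup (f := fun v => T.dist r (htd.bagOf v)) hvA)
  obtain ⟨i, hi, hmax⟩ : ∃ i, Heavy i ∧ ∀ j, Heavy j → T.dist r j ≤ T.dist r i := by
    let depth := fun n => ∃ j, Heavy j ∧ T.dist r j = n
    obtain ⟨i, hi, hidepth⟩ := Nat.findGreatest_spec (P := depth) (hbdd r hr) ⟨r, hr, rfl⟩
    exact ⟨i, hi, fun j hj => hidepth ▸ Nat.le_findGreatest (hbdd j hj) ⟨j, hj, rfl⟩⟩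
  refine ⟨i, D i, filter_subset _ _, hi, fun C hC hCA hCD => ?_⟩
  obtain ⟨u, huC, huD⟩ := not_disjoint_iff.1 hCD
  have hui : T.Separates i r (htd.bagOf u) := (mem_filter.1 huD).2
  have hu : u ∉ B i := (mem_sdiff.1 (hCA huC)).2
  have hne : i ≠ htd.bagOf u := fun h => hu (h ▸ htd.mem_bagOf u)
  obtain ⟨m, hadj, hm⟩ := exists_adj_not_separates (htd.tree.connected i _) hne
  have hCm : C ⊆ D m := by
    intro v hv
    obtain ⟨w, hw⟩ := hC u huC v hv
    exact mem_filter.2 ⟨(mem_sdiff.1 (hCA hv)).1, htd.separates_of_walk_of_adj hadj hm hui w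
      fun x hx => (mem_sdiff.1 (hCA (hw x hx))).2⟩
  have hmi : T.Separates i r m := by
    by_contra h
    exact not_separates_trans h hm hui
  have hm_light : ¬ Heavy m := fun hmh =>
    (hmax m hmh).not_gt (htd.tree.dist_lt_of_adj_of_separates hadj hmi)
  calc ∑ v ∈ C, ω v ≤ ∑ v ∈ D m, ω v := sum_le_sum_of_subset_of_nonneg hCm fun v _ _ => hω v
    _ ≤ W₀ := not_lt.1 hm_light

end IsTreeDecomp

theorem stmt_8_general {V ι : Type*} [Fintype V] (G : SimpleGraph V)
    (T : SimpleGraph ι) (B : ι → Finset V) (htd : IsTreeDecomp G T B) (tw : ℕ)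
    (hw : ∀ i, (B i).card ≤ tw + 1)
    (ω : V → ℝ) (hω : ∀ v, 0 ≤ ω v) (β : ℝ) (hβ : 0 < β) :
    ∃ S : Finset V, (S.card : ℝ) ≤ β * ((tw : ℝ) + 1) ∧
      ∀ c : (G.induce ((↑S)ᶜ : Set V)).ConnectedComponent,
        (∑ᶠ v ∈ c.supp, ω (v : V)) ≤ (∑ v : V, ω v) / β := by
  classical
  set W₀ := (∑ v : V, ω v) / β
  have hW₀ : 0 ≤ W₀ := div_nonneg (sum_nonneg fun v _ => hω v) hβ.le
  obtain ⟨S, k, hS, hk, hlight⟩ := exists_light_separator (fun C : Finset V => G.PreconnectedOn C)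
    hω hW₀ (fun A hA => by
      obtain ⟨i, D, hDA, hD, hi⟩ := htd.exists_heavy_bag hω hW₀ A hA
      exact ⟨B i, D, hw i, hDA, hD, hi⟩) univ
  refine ⟨S, ?_, fun c => ?_⟩
  · have hkβ : (k : ℝ) ≤ β := by
      rcases hk with rfl | hk
      · simpa using hβ.le
      · rw [← mul_div_cancel₀ (∑ v : V, ω v) hβ.ne'] at hk
        exact (lt_of_mul_lt_mul_right hk hW₀).le
    calc (#S : ℝ) ≤ k * (tw + 1) := by exact_mod_cast hS
      _ ≤ β * (tw + 1) := by gcongr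
  · have hfin := (Subtype.val '' c.supp).toFinite
    calc ∑ᶠ v ∈ c.supp, ω v = ∑ᶠ v ∈ Subtype.val '' c.supp, ω v :=
          (finsum_mem_image Subtype.val_injective.injOn).symm
      _ = ∑ v ∈ hfin.toFinset, ω v := finsum_mem_eq_finite_toFinset_sum _ hfin
      _ ≤ W₀ := hlight _ (by simpa using c.preconnectedOn_image_supp) fun v hv => by
          obtain ⟨x, -, rfl⟩ := hfin.mem_toFinset.1 hv
          exact mem_sdiff.2 ⟨mem_univ _, x.2⟩

/-- given a tree decomposition of width `tw` and nonnegative vertex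
weights, for every `β > 0` there is a set `S` of at most `β(tw+1)` vertices such that
every connected component of `G - S` has weight at most `ω(V)/β`. -/
theorem stmt_8 {V ι : Type*} [Fintype V] [DecidableEq V] (G : SimpleGraph V)
    (T : SimpleGraph ι) (B : ι → Finset V) (htd : IsTreeDecomp G T B) (tw : ℕ)
    (hw : ∀ i, (B i).card ≤ tw + 1)
    (ω : V → ℝ) (hω : ∀ v, 0 ≤ ω v) (β : ℝ) (hβ : 0 < β) :
    ∃ S : Finset V, (S.card : ℝ) ≤ β * ((tw : ℝ) + 1) ∧
      ∀ c : (G.induce ((↑S)ᶜ : Set V)).ConnectedComponent,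
        (∑ᶠ v ∈ c.supp, ω (v : V)) ≤ (∑ v : V, ω v) / β :=
  stmt_8_general G T B htd tw hw ω hω β hβ
end

section
/- Let F ⊆ 2^U be a non-empty family of subsets of a finite universe U. If each element u ∈ U is assigned a weight ω(u) chosen uniformly and independently at random from {1, 2, ..., W}, then with probability at least 1 - |U|/W there is a unique set S ∈ F minimizing ω(S) = Σ_{x∈S} ω(x). -/
/-!
Call `u ∈ U` ambiguous for a weighting `w` if some minimum-weight member of `F` contains `u`
and another one avoids it. If the minimum is not unique, two distinct minimizers differ at some
`u`, which is then ambiguous. For fixed weights off `u`, at most one value of `w u` makes `u`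
ambiguous: raising `w u` strictly above such a value pushes every set containing `u` strictly
above the weight of a minimizer avoiding `u`. So each `u` is ambiguous for at most
`W ^ (|U| - 1)` of the `W ^ |U|` weightings, and a union bound over `u` finishes the proof.
-/

open Finset

section Ambiguity

variable {U M : Type*} [AddCommMonoid M] [LinearOrder M]

def IsMinWeight (F : Finset (Finset U)) (w : U → M) (S : Finset U) : Prop :=
  S ∈ F ∧ ∀ T ∈ F, ∑ x ∈ S, w x ≤ ∑ x ∈ T, w x

def IsAmbiguous (F : Finset (Finset U)) (w : U → M) (u : U) : Prop :=
  ∃ S T, IsMinWeight F w S ∧ IsMinWeight F w T ∧ u ∈ S ∧ u ∉ T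

variable {F : Finset (Finset U)}

theorem exists_isAmbiguous_of_not_existsUnique (hF : F.Nonempty) (w : U → M)
    (h : ¬ ∃! S, IsMinWeight F w S) : ∃ u, IsAmbiguous F w u := by
  obtain ⟨S, hS, hSmin⟩ := exists_min_image F (fun S => ∑ x ∈ S, w x) hF
  obtain ⟨T, hT, hTS⟩ : ∃ T, IsMinWeight F w T ∧ T ≠ S := by
    simp only [ExistsUnique, not_exists, not_and, not_forall] at h
    obtain ⟨T, hT, hTS⟩ := h S ⟨hS, hSmin⟩
    exact ⟨T, hT, hTS⟩
  obtain ⟨u, hu⟩ : ∃ u, ¬ (u ∈ T ↔ u ∈ S) := by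
    by_contra! hTS'
    exact hTS (ext hTS')
  by_cases huT : u ∈ T
  · exact ⟨u, T, S, hT, ⟨hS, hSmin⟩, huT, by tauto⟩
  · exact ⟨u, S, T, ⟨hS, hSmin⟩, hT, by tauto, huT⟩

variable [IsOrderedCancelAddMonoid M]

theorem notMem_of_isMinWeight_of_lt {w w' : U → M} {u : U} {S T : Finset U}
    (hT : IsMinWeight F w T) (huT : u ∉ T) (hoff : ∀ x ≠ u, w x = w' x) (hlt : w u < w' u)
    (hS : IsMinWeight F w' S) : u ∉ S := by
  intro huS
  have hT_eq : ∑ x ∈ T, w x = ∑ x ∈ T, w' x :=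
    sum_congr rfl fun x hx => hoff x (ne_of_mem_of_not_mem hx huT)
  have hS_lt : ∑ x ∈ S, w x < ∑ x ∈ S, w' x :=
    sum_lt_sum (fun x _ => by rcases eq_or_ne x u with rfl | hx; exacts [hlt.le, (hoff x hx).le])
      ⟨u, huS, hlt⟩
  exact lt_irrefl _ <|
    calc ∑ x ∈ S, w' x ≤ ∑ x ∈ T, w' x := hS.2 T hT.1
      _ = ∑ x ∈ T, w x := hT_eq.symm
      _ ≤ ∑ x ∈ S, w x := hT.2 S hS.1
      _ < ∑ x ∈ S, w' x := hS_lt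

theorem IsAmbiguous.apply_eq {w w' : U → M} {u : U} (h : IsAmbiguous F w u)
    (h' : IsAmbiguous F w' u) (hoff : ∀ x ≠ u, w x = w' x) : w u = w' u := by
  obtain ⟨S, T, hS, hT, huS, huT⟩ := h
  obtain ⟨S', T', hS', hT', huS', huT'⟩ := h'
  rcases lt_trichotomy (w u) (w' u) with hlt | heq | hgt
  · exact absurd huS' (notMem_of_isMinWeight_of_lt hT huT hoff hlt hS')
  · exact heq
  · exact absurd huS
      (notMem_of_isMinWeight_of_lt hT' huT' (fun x hx => (hoff x hx).symm) hgt hS)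

end Ambiguity

section Counting

variable {U M α : Type*} [Fintype U] [DecidableEq U] [Fintype α]
  [AddCommMonoid M] [LinearOrder M] [IsOrderedCancelAddMonoid M] (F : Finset (Finset U))
  {φ : α → M}

open Classical in
theorem card_filter_isAmbiguous_le (hφ : Function.Injective φ) (u : U) :
    #{ω : U → α | IsAmbiguous F (φ ∘ ω) u} ≤ Fintype.card α ^ (Fintype.card U - 1) := by
  have hinj : Set.InjOn (fun (ω : U → α) (x : {x // x ≠ u}) => ω x)
      {ω | IsAmbiguous F (φ ∘ ω) u} := by
    intro ω hω ω' hω' h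
    have hoff : ∀ x ≠ u, ω x = ω' x := fun x hx => congrFun h ⟨x, hx⟩
    funext x
    rcases eq_or_ne x u with rfl | hx
    · exact hφ (hω.apply_eq hω' fun y hy => congrArg φ (hoff y hy))
    · exact hoff x hx
  calc _ ≤ #(univ : Finset ({x // x ≠ u} → α)) :=
        card_le_card_of_injOn _ (fun _ _ => mem_univ _) (by simpa using hinj)
    _ = _ := by simp

open Classical in
theorem card_filter_not_existsUnique_isMinWeight_le (hF : F.Nonempty)
    (hφ : Function.Injective φ) :
    #{ω : U → α | ¬ ∃! S, IsMinWeight F (φ ∘ ω) S} ≤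
      Fintype.card U * Fintype.card α ^ (Fintype.card U - 1) :=
  calc _ ≤ #(univ.biUnion fun u => {ω : U → α | IsAmbiguous F (φ ∘ ω) u}) :=
        card_le_card fun ω hω => by
          simpa using exists_isAmbiguous_of_not_existsUnique hF _ (mem_filter.1 hω).2
    _ ≤ ∑ u : U, #{ω : U → α | IsAmbiguous F (φ ∘ ω) u} := card_biUnion_le
    _ ≤ ∑ _u : U, Fintype.card α ^ (Fintype.card U - 1) :=
        sum_le_sum fun u _ => card_filter_isAmbiguous_le F hφ u
    _ = _ := by simp

end Counting

theorem one_sub_div_mul_pow {W : ℝ} (hW : W ≠ 0) (n : ℕ) :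
    (1 - n / W) * W ^ n = W ^ n - n * W ^ (n - 1) := by
  cases n with
  | zero => simp
  | succ n => field_simp; rw [pow_succ]; push_cast; ring

open Classical in
/-- Isolation Lemma: for a nonempty family `F` of subsets of a finite
universe `U`, the fraction of weight functions `ω : U → {1,…,W}` under which `F` has a
unique minimum-weight member is at least `1 - |U|/W`; stated as a count of such
weight functions. -/
theorem stmt_9 {U : Type*} [Fintype U] [DecidableEq U] (F : Finset (Finset U))
    (hF : F.Nonempty) (W : ℕ) (hW : 0 < W) :
    (1 - (Fintype.card U : ℝ) / (W : ℝ)) * (W : ℝ) ^ (Fintype.card U) ≤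
      (((Finset.univ : Finset (U → Fin W)).filter fun ω : U → Fin W =>
        ∃! S : Finset U, S ∈ F ∧ ∀ S' ∈ F,
          (∑ x ∈ S, ((ω x : ℕ) + 1)) ≤ ∑ x ∈ S', ((ω x : ℕ) + 1)).card : ℝ) := by
  let φ : Fin W → ℕ := fun i => i + 1
  have hφ : Function.Injective φ := fun i j h => Fin.ext (Nat.add_right_cancel h)
  change _ ≤ ((#{ω : U → Fin W | ∃! S, IsMinWeight F (φ ∘ ω) S} : ℕ) : ℝ)
  have hsplit := card_filter_add_card_filter_not (s := univ)
    (fun ω : U → Fin W => ∃! S, IsMinWeight F (φ ∘ ω) S)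
  have hbad := card_filter_not_existsUnique_isMinWeight_le F hF hφ
  rw [card_univ, Fintype.card_fun, Fintype.card_fin] at hsplit
  rw [Fintype.card_fin] at hbad
  rw [one_sub_div_mul_pow (by exact_mod_cast hW.ne')]
  have hsplitR := congrArg (Nat.cast : ℕ → ℝ) hsplit
  have hbadR : (_ : ℝ) ≤ _ := Nat.cast_le.mpr hbad
  push_cast at hsplitR hbadR
  linarith
end

section
/- Subdividing every edge of a graph G yields a graph G' such that G has a feedback vertex set of size k if and only if G' has a feedback vertex set of size k that is an independent set and avoids all subdivision vertices. -/
/-- The graph obtained from `G` by subdividing every edge: vertices are the original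
vertices together with one subdivision vertex per edge, and each subdivision vertex is
adjacent exactly to the two endpoints of its edge. -/
def subdivide {V : Type*} (G : SimpleGraph V) : SimpleGraph (V ⊕ G.edgeSet) where
  Adj x y :=
    match x, y with
    | Sum.inl v, Sum.inr e => v ∈ (e : Sym2 V)
    | Sum.inr e, Sum.inl v => v ∈ (e : Sym2 V)
    | _, _ => False
  symm := ⟨by rintro (v | e) (w | f) h <;> simp_all⟩
  loopless := ⟨by rintro (v | e) h <;> simp_all⟩

/-!
A feedback vertex set `S` of `G` corresponds to `Sum.inl '' S` in the subdivision `G'`: such a set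
is independent, and every set avoiding the subdivision vertices is of this form. It remains to see
that `G - S` is a forest iff `G' - S` is, which we compare edge by edge through bridges. A path in
`G - S` avoiding the edge `uv` becomes, by routing through subdivision vertices, a path in `G' - S`
avoiding the edge from `u` to the subdivision vertex of `uv`. Conversely, sending each subdivision
vertex to an endpoint of its edge, and that of `e = uv` to `v`, contracts a path in `G' - S` from
`u` to the vertex of `e` that avoids the edge between them to a path from `u` to `v` in `G - S`
avoiding `uv`.
-/

namespace SimpleGraph

variable {V : Type*}

theorem Reachable.exists_related_reachable {W : Type*} {G : SimpleGraph V}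
    {G' : SimpleGraph W} (R : V → W → Prop)
    (hR : ∀ ⦃x y w⦄, G.Adj x y → R x w → ∃ w', R y w' ∧ G'.Reachable w w')
    {x y : V} {w : W} (h : G.Reachable x y) (hxw : R x w) :
    ∃ w', R y w' ∧ G'.Reachable w w' := by
  rw [reachable_iff_reflTransGen] at h
  induction h with
  | refl => exact ⟨w, hxw, .rfl⟩
  | tail _ hyz ih =>
    obtain ⟨w', hw', hww'⟩ := ih
    obtain ⟨w'', hw'', hw'w''⟩ := hR hyz hw'
    exact ⟨w'', hw'', hww'.trans hw'w''⟩

variable {G : SimpleGraph V}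

@[simp] lemma subdivide_adj_inl_inr {v : V} {e : G.edgeSet} :
    (subdivide G).Adj (.inl v) (.inr e) ↔ v ∈ (e : Sym2 V) := .rfl

@[simp] lemma subdivide_adj_inr_inl {v : V} {e : G.edgeSet} :
    (subdivide G).Adj (.inr e) (.inl v) ↔ v ∈ (e : Sym2 V) := .rfl

@[simp] lemma subdivide_not_adj_inl_inl {v w : V} : ¬ (subdivide G).Adj (.inl v) (.inl w) := id

@[simp] lemma subdivide_not_adj_inr_inr {e f : G.edgeSet} :
    ¬ (subdivide G).Adj (.inr e) (.inr f) := id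

variable (S : Set V)

theorem isAcyclic_induce_of_isAcyclic_induce_subdivide
    (h : ((subdivide G).induce (Sum.inl '' S)ᶜ).IsAcyclic) : (G.induce Sᶜ).IsAcyclic := by
  rw [isAcyclic_iff_forall_adj_isBridge] at h ⊢
  intro u v huv
  rw [isBridge_iff]
  intro hreach
  let ι : (Sᶜ : Set V) → ((Sum.inl '' S)ᶜ : Set (V ⊕ G.edgeSet)) :=
    fun w ↦ ⟨.inl w, by simpa using w.2.out⟩
  let e : G.edgeSet := ⟨s(u, v), huv⟩
  let xe : ((Sum.inl '' S)ᶜ : Set (V ⊕ G.edgeSet)) := ⟨.inr e, by simp⟩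
  have step : ∀ ⦃a b : (Sᶜ : Set V)⦄, ((G.induce Sᶜ).deleteEdges {s(u, v)}).Adj a b →
      (((subdivide G).induce (Sum.inl '' S)ᶜ).deleteEdges {s(ι u, xe)}).Reachable
        (ι a) (ι b) := by
    intro a b hab
    rw [deleteEdges_adj, Set.mem_singleton_iff] at hab
    let f : G.edgeSet := ⟨s(a, b), hab.1⟩
    let xf : ((Sum.inl '' S)ᶜ : Set (V ⊕ G.edgeSet)) := ⟨.inr f, by simp⟩
    have hf : f ≠ e := fun hfe ↦
      hab.2 <| Sym2.map.injective Subtype.val_injective <| by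
        simpa only [Sym2.map_mk] using congrArg Subtype.val hfe
    refine Reachable.trans (v := xf) (Adj.reachable ?_) (Adj.reachable ?_)
    · simp [ι, xf, xe, f, hf]
    · simp [ι, xf, xe, f, hf]
  refine h (v := ι u) (w := xe) (by simp [ι, xe, e]) ?_
  obtain ⟨_, rfl, hreach⟩ := hreach.exists_related_reachable (fun w x ↦ x = ι w)
    (fun a b _ hab hx ↦ ⟨ι b, rfl, hx ▸ step hab⟩) rfl
  refine hreach.trans (Adj.reachable ?_)
  simpa [ι, xe, e, Subtype.ext_iff] using huv.ne'

def ContractsTo (e : G.edgeSet) (v : V) : V ⊕ G.edgeSet → V → Prop :=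
  Sum.elim (· = ·) fun f w ↦ w ∈ (f : Sym2 V) ∧ (f = e → w = v)

theorem exists_contractsTo_of_adj {u v : V} (hu : Sum.inl u ∈ (Sum.inl '' S)ᶜ) {e : G.edgeSet}
    (he : (e : Sym2 V) = s(u, v)) {x y : ((Sum.inl '' S)ᶜ : Set (V ⊕ G.edgeSet))}
    {w : (Sᶜ : Set V)} (hxy : (((subdivide G).induce (Sum.inl '' S)ᶜ).deleteEdges
      {s(⟨.inl u, hu⟩, ⟨.inr e, by simp⟩)}).Adj x y) (hxw : ContractsTo e v x w) :
    ∃ w' : (Sᶜ : Set V), ContractsTo e v y w' ∧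
      ((G.induce Sᶜ).deleteEdges {d | d.map Subtype.val = e}).Reachable w w' := by
  obtain ⟨a | f, hx⟩ := x <;> obtain ⟨b | g, hy⟩ := y <;>
    simp only [deleteEdges_adj, Set.mem_singleton_iff] at hxy
  · simp at hxy
  · simp only [ContractsTo, Sum.elim_inl] at hxw
    simp at hxy
    subst hxw
    refine ⟨w, ⟨hxy.1, ?_⟩, .rfl⟩
    rintro rfl
    have hw := hxy.1
    rw [he, Sym2.mem_iff] at hw
    exact hw.resolve_left fun hwu ↦ hxy.2 hwu rfl
  · simp only [ContractsTo, Sum.elim_inr] at hxw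
    simp at hxy
    refine ⟨⟨b, by simpa using hy⟩, rfl, ?_⟩
    by_cases hwb : (w : V) = b
    · exact (Subtype.ext hwb : w = ⟨b, _⟩) ▸ .rfl
    have hf : (f : Sym2 V) = s((w : V), b) :=
      (Sym2.mem_and_mem_iff hwb).mp ⟨hxw.1, hxy.1⟩
    refine Adj.reachable ((deleteEdges_adj ..).mpr ⟨?_, ?_⟩)
    · change G.Adj w b
      rw [← mem_edgeSet, ← hf]
      exact f.2
    · intro hwbe
      simp only [Set.mem_ofPred_eq, Sym2.map_mk] at hwbe
      have hfe : f = e := Subtype.ext (hf.trans hwbe)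
      have hwv := hxw.2 hfe
      rw [he, Sym2.eq_iff] at hwbe
      grind
  · simp at hxy

theorem isBridge_induce_subdivide_of_isAcyclic_induce (h : (G.induce Sᶜ).IsAcyclic)
    {u : V} (hu : Sum.inl u ∈ (Sum.inl '' S)ᶜ) {e : G.edgeSet} (hue : u ∈ (e : Sym2 V)) :
    ((subdivide G).induce (Sum.inl '' S)ᶜ).IsBridge
      s(⟨.inl u, hu⟩, ⟨.inr e, by simp⟩) := by
  obtain ⟨v, he⟩ := Sym2.mem_iff_exists.mp hue
  rw [isBridge_iff]
  intro hreach
  let u' : (Sᶜ : Set V) := ⟨u, by simpa using hu⟩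
  have hstart : ContractsTo e v (Sum.inl u) u' := rfl
  obtain ⟨w, ⟨-, hwv⟩, hreach⟩ :=
    hreach.exists_related_reachable
      (fun (x : ((Sum.inl '' S)ᶜ : Set (V ⊕ G.edgeSet))) (w : (Sᶜ : Set V)) ↦
        ContractsTo e v x w)
      (fun _ _ _ ↦ exists_contractsTo_of_adj S hu he) hstart
  replace hwv := hwv rfl
  have huw : (G.induce Sᶜ).Adj u' w := by simpa [u', hwv, he] using e.2
  refine isAcyclic_iff_forall_adj_isBridge.mp h huw (hreach.mono (deleteEdges_anti ?_))
  simp [u', he, hwv]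

theorem isAcyclic_induce_subdivide_iff :
    ((subdivide G).induce (Sum.inl '' S)ᶜ).IsAcyclic ↔ (G.induce Sᶜ).IsAcyclic := by
  refine ⟨isAcyclic_induce_of_isAcyclic_induce_subdivide S, fun h ↦ ?_⟩
  rw [isAcyclic_iff_forall_adj_isBridge]
  rintro ⟨u | e, hx⟩ ⟨v | f, hy⟩ hxy
  · exact hxy.elim
  · exact isBridge_induce_subdivide_of_isAcyclic_induce S h hx hxy
  · rw [Sym2.eq_swap]
    exact isBridge_induce_subdivide_of_isAcyclic_induce S h hy hxy
  · exact hxy.elim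

end SimpleGraph

open SimpleGraph

theorem stmt_12_general {V : Type*} (G : SimpleGraph V) (k : ℕ) :
    (∃ S : Finset V, S.card ≤ k ∧ (G.induce ((↑S)ᶜ : Set V)).IsAcyclic) ↔
    (∃ S' : Finset (V ⊕ G.edgeSet), S'.card ≤ k ∧
      (∀ u ∈ S', ∀ v ∈ S', ¬ (subdivide G).Adj u v) ∧
      (∀ e : G.edgeSet, Sum.inr e ∉ S') ∧
      ((subdivide G).induce ((↑S')ᶜ : Set (V ⊕ G.edgeSet))).IsAcyclic) := by
  constructor
  · rintro ⟨S, hcard, hacyc⟩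
    refine ⟨S.map .inl, by simpa using hcard, by simp, by simp, ?_⟩
    rw [Finset.coe_map]
    exact (isAcyclic_induce_subdivide_iff _).mpr hacyc
  · rintro ⟨S', hcard, -, hinr, hacyc⟩
    have hS' : (S' : Set (V ⊕ G.edgeSet)) = Sum.inl '' S'.toLeft := by
      ext (v | e) <;> simp [hinr]
    rw [hS', isAcyclic_induce_subdivide_iff] at hacyc
    exact ⟨S'.toLeft, Finset.card_toLeft_le.trans hcard, hacyc⟩

/-- `G` has a feedback vertex set of size `k` iff the subdivided graph
`G'` has a feedback vertex set of size `k` that is an independent set and avoids all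
subdivision vertices. -/
theorem stmt_12 {V : Type*} [Fintype V] [DecidableEq V] (G : SimpleGraph V) (k : ℕ) :
    (∃ S : Finset V, S.card ≤ k ∧ (G.induce ((↑S)ᶜ : Set V)).IsAcyclic) ↔
    (∃ S' : Finset (V ⊕ G.edgeSet), S'.card ≤ k ∧
      (∀ u ∈ S', ∀ v ∈ S', ¬ (subdivide G).Adj u v) ∧
      (∀ e : G.edgeSet, Sum.inr e ∉ S') ∧
      ((subdivide G).induce ((↑S')ᶜ : Set (V ⊕ G.edgeSet))).IsAcyclic) :=
  stmt_12_general G k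
end

section
/- Let G be a graph, F ⊆ V(G) with G - F an ℓ-forest, and let G' be obtained from G by subdividing every edge, with R the set of subdivision vertices. Then (G, k, ℓ) has a vertex set S of size at most k with G - S an ℓ-forest if and only if (G', k, ℓ) has a vertex set S' of size at most k that is independent in G', disjoint from R, and with G' - S' an ℓ-forest. -/
/-!
For a subgraph `B` of the subdivision `G'`, let `unsubdivide B` be the graph on `V` keeping the
edges of `G` both of whose halves survive in `B`. Deleting one half of `e = uw` from `B` affects
reachability between `u` and `w` exactly as deleting `e` from `unsubdivide B` does, so by the
bridge characterisation of forests `B` is acyclic iff `unsubdivide B` is. Deleting a half-edge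
costs as much as deleting the whole edge, hence `B` is an `ℓ`-forest iff `unsubdivide B` is.
Applied to `B = G' - inl '' S`, whose unsubdivision is `G - S`, this gives the theorem: a set
`S'` avoiding the subdivision vertices is exactly `inl '' S` for `S = inl ⁻¹' S'`.
-/

open SimpleGraph Finset

namespace SimpleGraph

variable {V : Type*}

lemma IsAcyclic.of_induce {K : SimpleGraph V} {s : Set V}
    (hK : ∀ ⦃u v⦄, K.Adj u v → u ∈ s) (h : (K.induce s).IsAcyclic) : K.IsAcyclic := by
  intro v c hc
  have hs : ∀ x ∈ c.support, x ∈ s := by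
    intro x hx
    obtain ⟨e, he, hxe⟩ := (Walk.mem_support_iff_exists_mem_edges_of_not_nil hc.not_nil).1 hx
    induction e with
    | _ a b =>
      have hab : K.Adj a b := c.edges_subset_edgeSet he
      rcases Sym2.mem_iff.1 hxe with rfl | rfl
      exacts [hK hab, hK hab.symm]
  exact h (c.induce s hs)
    (.of_map (f := (Embedding.induce s).toHom) (by rwa [Walk.map_induce]))

lemma spanningCoe_induce_adj {K : SimpleGraph V} {s : Set V} {u v : V} :
    (K.induce s).spanningCoe.Adj u v ↔ K.Adj u v ∧ u ∈ s ∧ v ∈ s := by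
  rw [map_adj]
  constructor
  · rintro ⟨⟨a, ha⟩, ⟨b, hb⟩, hab, rfl, rfl⟩
    exact ⟨hab, ha, hb⟩
  · rintro ⟨huv, hu, hv⟩
    exact ⟨⟨u, hu⟩, ⟨v, hv⟩, huv, rfl, rfl⟩

end SimpleGraph

section LForest

variable {V W : Type*} {ℓ : ℕ}

lemma isLForest_iff_exists_deleteEdges {H : SimpleGraph V} :
    IsLForest H ℓ ↔ ∃ t : Finset (Sym2 V), #t ≤ ℓ ∧ (H.deleteEdges ↑t).IsAcyclic := by
  classical
  refine ⟨fun ⟨t, _, ht, hacyc⟩ => ⟨t, ht, hacyc⟩, fun ⟨t, ht, hacyc⟩ => ?_⟩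
  refine ⟨t.filter (· ∈ H.edgeSet), fun e he => (mem_filter.1 he).2,
    (card_filter_le _ _).trans ht, ?_⟩
  rw [coe_filter]
  convert hacyc using 1
  exact (H.deleteEdges_eq_inter_edgeSet _).symm

lemma IsLForest.comap {H : SimpleGraph V} {K : SimpleGraph W} (f : H →g K)
    (hf : Function.Injective f) (hK : IsLForest K ℓ) : IsLForest H ℓ := by
  rw [isLForest_iff_exists_deleteEdges] at hK ⊢
  obtain ⟨t, ht, hacyc⟩ := hK
  have hinj := Sym2.map.injective hf
  refine ⟨t.preimage (Sym2.map f) hinj.injOn,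
    (card_le_card_of_injOn _ (fun e he => mem_preimage.1 he) hinj.injOn).trans ht, ?_⟩
  refine hacyc.comap ⟨f, fun {a b} hab => ?_⟩ hf
  rw [deleteEdges_adj] at hab ⊢
  exact ⟨f.map_adj hab.1, fun h => hab.2 (mem_preimage.2 h)⟩

lemma isLForest_spanningCoe_iff {s : Set V} {H : SimpleGraph s} :
    IsLForest H.spanningCoe ℓ ↔ IsLForest H ℓ := by
  refine ⟨.comap (Embedding.map _ H).toHom (Embedding.map _ H).injective, fun hH => ?_⟩
  rw [isLForest_iff_exists_deleteEdges] at hH ⊢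
  obtain ⟨t, ht, hacyc⟩ := hH
  refine ⟨t.map (Function.Embedding.subtype s).sym2Map, (card_map _).trans_le ht, ?_⟩
  refine IsAcyclic.of_induce (s := s) (fun u v huv => ?_) (hacyc.anti fun a b hab => ?_)
  · obtain ⟨⟨a, ha⟩, -, -, rfl, -⟩ := (map_adj _ _ _ _).1 (deleteEdges_le _ huv)
    exact ha
  · rw [comap_adj, deleteEdges_adj] at hab
    rw [deleteEdges_adj]
    refine ⟨map_adj_apply.1 hab.1, fun h => hab.2 ?_⟩
    exact mem_map_of_mem _ h

end LForest

section Unsubdivide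

variable {V : Type*} {G : SimpleGraph V} {B : SimpleGraph (V ⊕ G.edgeSet)} {ℓ : ℕ}

def unsubdivide (B : SimpleGraph (V ⊕ G.edgeSet)) : SimpleGraph V where
  Adj u v := u ≠ v ∧ ∃ e, B.Adj (.inl u) (.inr e) ∧ B.Adj (.inr e) (.inl v)
  symm := ⟨fun _ _ ⟨huv, e, hu, hv⟩ => ⟨huv.symm, e, hv.symm, hu.symm⟩⟩
  loopless := ⟨fun _ h => h.1 rfl⟩

lemma coe_eq_of_adj_inl_inr (hB : B ≤ subdivide G) {u v : V} {e : G.edgeSet}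
    (hu : B.Adj (.inl u) (.inr e)) (hv : B.Adj (.inr e) (.inl v)) (huv : u ≠ v) :
    (e : Sym2 V) = s(u, v) :=
  (Sym2.mem_and_mem_iff huv).1 ⟨hB hu, hB hv⟩

lemma reachable_inl_of_reachable_unsubdivide {u v : V} (h : (unsubdivide B).Reachable u v) :
    B.Reachable (.inl u) (.inl v) := by
  rw [reachable_iff_reflTransGen] at h ⊢
  exact h.lift' Sum.inl fun _ _ ⟨_, _, ha, hb⟩ => .tail (.single ha) hb

lemma exists_reachable_unsubdivide_of_reachable (hB : B ≤ subdivide G) {u : V}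
    {y : V ⊕ G.edgeSet} (h : B.Reachable (.inl u) y) :
    ∃ w, (y = .inl w ∨ B.Adj (.inl w) y) ∧ (unsubdivide B).Reachable u w := by
  rw [reachable_iff_reflTransGen] at h
  induction h with
  | refl => exact ⟨u, .inl rfl, .rfl⟩
  | @tail y z _ hyz ih =>
    obtain ⟨w, rfl | hwy, hw⟩ := ih
    · exact ⟨w, .inr hyz, hw⟩
    rcases y with a | e
    · exact (hB hwy).elim
    rcases z with v | f
    · by_cases hwv : w = v
      · exact ⟨w, .inl (hwv ▸ rfl), hw⟩
      · exact ⟨v, .inl rfl, hw.trans (Adj.reachable ⟨hwv, e, hwy, hyz⟩)⟩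
    · exact (hB hyz).elim

lemma unsubdivide_deleteEdges (hB : B ≤ subdivide G) {u w : V} {e : G.edgeSet}
    (he : (e : Sym2 V) = s(u, w)) :
    unsubdivide (B.deleteEdges {s(.inl u, .inr e)}) = (unsubdivide B).deleteEdges {s(u, w)} := by
  ext a b
  simp only [unsubdivide, deleteEdges_adj, Set.mem_singleton_iff]
  constructor
  · rintro ⟨hab, f, ⟨haf, hf₁⟩, hfb, hf₂⟩
    refine ⟨⟨hab, f, haf, hfb⟩, fun h => ?_⟩
    obtain rfl : f = e :=
      Subtype.ext ((coe_eq_of_adj_inl_inr hB haf hfb hab).trans (h.trans he.symm))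
    rcases Sym2.eq_iff.1 h with ⟨rfl, -⟩ | ⟨-, rfl⟩
    · exact hf₁ rfl
    · exact hf₂ Sym2.eq_swap
  · rintro ⟨⟨hab, f, haf, hfb⟩, hne⟩
    have hfe : f ≠ e := by
      rintro rfl
      exact hne ((coe_eq_of_adj_inl_inr hB haf hfb hab).symm.trans he)
    refine ⟨hab, f, ⟨haf, ?_⟩, hfb, ?_⟩ <;> simp [hfe]

theorem isAcyclic_unsubdivide_iff (hB : B ≤ subdivide G) :
    (unsubdivide B).IsAcyclic ↔ B.IsAcyclic := by
  simp only [isAcyclic_iff_forall_adj_isBridge, isBridge_iff]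
  constructor
  · intro hA
    have key : ∀ u e, B.Adj (.inl u) (.inr e) →
        ¬ (B.deleteEdges {s(.inl u, .inr e)}).Reachable (.inl u) (.inr e) := by
      intro u e hue hreach
      obtain ⟨w, hw | hwe, hreach⟩ :=
        exists_reachable_unsubdivide_of_reachable ((deleteEdges_le _).trans hB) hreach
      · cases hw
      rw [deleteEdges_adj, Set.mem_singleton_iff] at hwe
      have hwu : w ≠ u := by rintro rfl; exact hwe.2 rfl
      have he := coe_eq_of_adj_inl_inr hB hue hwe.1.symm hwu.symm
      rw [unsubdivide_deleteEdges hB he] at hreach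
      exact hA ⟨hwu.symm, e, hue, hwe.1.symm⟩ hreach
    rintro (u | e) (v | f) hadj
    · exact (hB hadj).elim
    · exact key u f hadj
    · rw [Sym2.eq_swap, reachable_comm]
      exact key v e hadj.symm
    · exact (hB hadj).elim
  · rintro hB' u v ⟨huv, e, hu, hv⟩ hreach
    rw [← unsubdivide_deleteEdges hB (coe_eq_of_adj_inl_inr hB hu hv huv)] at hreach
    refine hB' hu ((reachable_inl_of_reachable_unsubdivide hreach).trans (Adj.reachable ?_))
    rw [deleteEdges_adj]
    exact ⟨hv.symm, by simp [huv.symm]⟩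

end Unsubdivide

section SubdivideLForest

variable {V : Type*} {G : SimpleGraph V} {B : SimpleGraph (V ⊕ G.edgeSet)} {ℓ : ℕ}

lemma isLForest_of_isLForest_unsubdivide (hB : B ≤ subdivide G)
    (h : IsLForest (unsubdivide B) ℓ) : IsLForest B ℓ := by
  classical
  rw [isLForest_iff_exists_deleteEdges] at h ⊢
  obtain ⟨t, ht, hacyc⟩ := h
  let half (e : G.edgeSet) : Sym2 (V ⊕ G.edgeSet) := s(.inl (e : Sym2 V).out.1, .inr e)
  refine ⟨(t.subtype (· ∈ G.edgeSet)).image half,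
    card_image_le.trans ((card_subtype _ _).trans_le ((card_filter_le _ _).trans ht)), ?_⟩
  rw [← isAcyclic_unsubdivide_iff ((deleteEdges_le _).trans hB)]
  refine hacyc.anti fun u v ⟨huv, e, hu, hv⟩ => ?_
  rw [deleteEdges_adj] at hu hv ⊢
  have he := coe_eq_of_adj_inl_inr hB hu.1 hv.1 huv
  refine ⟨⟨huv, e, hu.1, hv.1⟩, fun hmem => ?_⟩
  have het : e ∈ t.subtype (· ∈ G.edgeSet) := mem_subtype.2 (he ▸ hmem)
  have hout : (e : Sym2 V).out.1 ∈ s(u, v) := by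
    rw [← he]
    exact Sym2.out_fst_mem _
  rcases Sym2.mem_iff.1 hout with h | h
  · exact hu.2 (mem_image.2 ⟨e, het, by simp only [half, h]⟩)
  · exact hv.2 (mem_image.2 ⟨e, het, by simp only [half, h]; exact Sym2.eq_swap⟩)

/-- The edge `e` of `G` that `s(inl v, inr e)` is half of; `none` on other pairs. -/
def subdividedEdge : Sym2 (V ⊕ G.edgeSet) → Option (Sym2 V) :=
  Sym2.lift ⟨fun x y => match x, y with
    | .inl _, .inr e | .inr e, .inl _ => some e
    | _, _ => none, by rintro (_ | _) (_ | _) <;> rfl⟩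

lemma isLForest_unsubdivide_of_isLForest (hB : B ≤ subdivide G) (h : IsLForest B ℓ) :
    IsLForest (unsubdivide B) ℓ := by
  classical
  rw [isLForest_iff_exists_deleteEdges] at h ⊢
  obtain ⟨t, ht, hacyc⟩ := h
  refine ⟨(t.image subdividedEdge).eraseNone,
    (card_eraseNone_le _).trans (card_image_le.trans ht), ?_⟩
  rw [← isAcyclic_unsubdivide_iff ((deleteEdges_le _).trans hB)] at hacyc
  refine hacyc.anti fun u v huv' => ?_
  rw [deleteEdges_adj] at huv'
  obtain ⟨⟨huv, e, hu, hv⟩, ht⟩ := huv'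
  have hnot : ∀ x, subdividedEdge x = some ↑e → x ∉ t := fun x hx hxt =>
    ht (coe_eq_of_adj_inl_inr hB hu hv huv ▸ mem_eraseNone.2 (mem_image.2 ⟨x, hxt, hx⟩))
  exact ⟨huv, e, deleteEdges_adj.2 ⟨hu, hnot _ rfl⟩, deleteEdges_adj.2 ⟨hv, hnot _ rfl⟩⟩

lemma unsubdivide_spanningCoe_induce (s : Set V) :
    unsubdivide ((subdivide G).induce (Sum.inl '' s)ᶜ).spanningCoe =
      (G.induce sᶜ).spanningCoe := by
  ext u v
  simp only [unsubdivide, spanningCoe_induce_adj, Set.mem_compl_iff, Set.mem_image,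
    Sum.inl.injEq, exists_eq_right, reduceCtorEq, and_false, exists_false, not_false_eq_true,
    and_true, true_and]
  constructor
  · rintro ⟨huv, e, ⟨hu, hus⟩, hv, hvs⟩
    exact ⟨G.mem_edgeSet.1 ((Sym2.mem_and_mem_iff huv).1 ⟨hu, hv⟩ ▸ e.2), hus, hvs⟩
  · rintro ⟨huv, hus, hvs⟩
    exact ⟨huv.ne, ⟨s(u, v), huv⟩, ⟨Sym2.mem_mk_left u v, hus⟩,
      Sym2.mem_mk_right u v, hvs⟩

theorem isLForest_subdivide_induce_iff (s : Set V) :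
    IsLForest ((subdivide G).induce (Sum.inl '' s)ᶜ) ℓ ↔ IsLForest (G.induce sᶜ) ℓ := by
  have hB := spanningCoe_induce_le (subdivide G) (Sum.inl '' s)ᶜ
  rw [← isLForest_spanningCoe_iff, ← isLForest_spanningCoe_iff (H := G.induce sᶜ),
    ← unsubdivide_spanningCoe_induce s]
  exact ⟨isLForest_unsubdivide_of_isLForest hB, isLForest_of_isLForest_unsubdivide hB⟩

end SubdivideLForest

theorem stmt_13_general {V : Type*} (G : SimpleGraph V)
    (k ℓ : ℕ) :
    (∃ S : Finset V, S.card ≤ k ∧ IsLForest (G.induce ((↑S)ᶜ : Set V)) ℓ) ↔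
    (∃ S' : Finset (V ⊕ G.edgeSet), S'.card ≤ k ∧
      (∀ u ∈ S', ∀ v ∈ S', ¬ (subdivide G).Adj u v) ∧
      (∀ e : G.edgeSet, Sum.inr e ∉ S') ∧
      IsLForest ((subdivide G).induce ((↑S')ᶜ : Set (V ⊕ G.edgeSet))) ℓ) := by
  classical
  constructor
  · rintro ⟨S, hSk, hS⟩
    refine ⟨S.image .inl, (card_image_of_injective _ Sum.inl_injective).trans_le hSk, ?_,
      by simp, by rwa [coe_image, isLForest_subdivide_induce_iff]⟩
    simp only [mem_image]
    rintro _ ⟨a, -, rfl⟩ _ ⟨b, -, rfl⟩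
    exact id
  · rintro ⟨S', hS'k, -, hR, hS'⟩
    have hinj : Set.InjOn (Sum.inl : V → V ⊕ G.edgeSet)
        (Sum.inl ⁻¹' (S' : Set (V ⊕ G.edgeSet))) :=
      Sum.inl_injective.injOn
    refine ⟨S'.preimage Sum.inl hinj,
      card_le_card_of_injOn Sum.inl (fun a ha => mem_preimage.1 ha) Sum.inl_injective.injOn
        |>.trans hS'k, ?_⟩
    have hS'_eq : (S' : Set (V ⊕ G.edgeSet)) = Sum.inl '' ↑(S'.preimage Sum.inl hinj) := by
      ext (a | e) <;> simp [hR]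
    rwa [hS'_eq, isLForest_subdivide_induce_iff] at hS'

/-- with `G - F` an `ℓ`-forest, the instance `(G, k, ℓ)` has a set `S`
of size at most `k` with `G - S` an `ℓ`-forest iff the subdivided graph `G'` has a set
`S'` of size at most `k` that is independent in `G'`, disjoint from the set `R` of
subdivision vertices, and with `G' - S'` an `ℓ`-forest. -/
theorem stmt_13 {V : Type*} [Fintype V] [DecidableEq V] (G : SimpleGraph V)
    (k ℓ : ℕ) (F : Finset V) (hF : IsLForest (G.induce ((↑F)ᶜ : Set V)) ℓ) :
    (∃ S : Finset V, S.card ≤ k ∧ IsLForest (G.induce ((↑S)ᶜ : Set V)) ℓ) ↔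
    (∃ S' : Finset (V ⊕ G.edgeSet), S'.card ≤ k ∧
      (∀ u ∈ S', ∀ v ∈ S', ¬ (subdivide G).Adj u v) ∧
      (∀ e : G.edgeSet, Sum.inr e ∉ S') ∧
      IsLForest ((subdivide G).induce ((↑S')ᶜ : Set (V ⊕ G.edgeSet))) ℓ) :=
  stmt_13_general G k ℓ
end
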